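/- arXiv:math-ph/0611037 — 6 statements merged into one kernel-verified Lean document; each statement's English description precedes it below -/
import Mathlib

section
/- For complex θ = e^ξ with |ξ| < ξ₀ < 1/2, and for all p ≥ 0, m > 0, the complex square root E_θ(p) = √(p² + m²θ²) satisfies (1 - ξ₀)·√(p² + m²) ≤ |E_θ(p)| ≤ (1 + 2ξ₀)·√(p² + m²). -/
/-!
With `w = θ² = exp (2ξ)` the radicand is `p² + m² w`, and `‖z ^ (1/2)‖ = √‖z‖`, so it suffices to
bound `‖p² + m² w‖` between `(1 - ξ₀)² (p² + m²)` and `(1 + 2ξ₀)² (p² + m²)`. The upper bound is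
the triangle inequality with `‖w‖ = e^{2 Re ξ} ≤ e^{2ξ₀} ≤ (1 + 2ξ₀)²`. For the lower bound, expand
`‖p² + m² w‖² = p⁴ + 2p²m² Re w + m⁴‖w‖²` and use `Re w = e^{2 Re ξ} cos (2 Im ξ) ≥ (1 - ξ₀)⁴` and
`‖w‖ ≥ e^{-2ξ₀} ≥ (1 - ξ₀)²`.
-/

open Complex

lemma Complex.norm_cpow_one_half (z : ℂ) : ‖z ^ ((1 : ℂ) / 2)‖ = √‖z‖ := by
  rw [show (1 : ℂ) / 2 = ((1 / 2 : ℝ) : ℂ) by norm_num, norm_cpow_real, Real.sqrt_eq_rpow]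

lemma Complex.sq_norm_ofReal_add_ofReal_mul (a b : ℝ) (w : ℂ) :
    ‖(a : ℂ) + b * w‖ ^ 2 = a ^ 2 + 2 * a * b * w.re + b ^ 2 * ‖w‖ ^ 2 := by
  simp only [Complex.sq_norm, normSq_apply, add_re, add_im, mul_re, mul_im, ofReal_re, ofReal_im]
  ring

lemma Complex.mul_add_le_norm_ofReal_add_ofReal_mul {a b c : ℝ} {w : ℂ} (ha : 0 ≤ a) (hb : 0 ≤ b)
    (hc₀ : 0 ≤ c) (hc₁ : c ≤ 1) (hre : c ^ 2 ≤ w.re) (hnorm : c ≤ ‖w‖) :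
    c * (a + b) ≤ ‖(a : ℂ) + b * w‖ := by
  refine abs_le_of_sq_le_sq' ?_ (norm_nonneg _) |>.2
  rw [sq_norm_ofReal_add_ofReal_mul]
  have hc2 : c ^ 2 ≤ 1 := pow_le_one₀ hc₀ hc₁
  have hnorm2 : c ^ 2 ≤ ‖w‖ ^ 2 := pow_le_pow_left₀ hc₀ hnorm 2
  nlinarith [mul_nonneg ha hb, sq_nonneg a, sq_nonneg b,
    mul_le_mul_of_nonneg_left hnorm2 (sq_nonneg b),
    mul_le_mul_of_nonneg_left hre (mul_nonneg ha hb)]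

lemma Complex.norm_ofReal_add_ofReal_mul_le {a b C : ℝ} {w : ℂ} (ha : 0 ≤ a) (hb : 0 ≤ b)
    (hC : 1 ≤ C) (hnorm : ‖w‖ ≤ C) : ‖(a : ℂ) + b * w‖ ≤ C * (a + b) := by
  calc ‖(a : ℂ) + b * w‖ ≤ a + b * ‖w‖ := by
        simpa [norm_mul, abs_of_nonneg ha, abs_of_nonneg hb] using norm_add_le (a : ℂ) (b * w)
    _ ≤ C * (a + b) := by nlinarith [mul_le_mul_of_nonneg_left hnorm hb]

lemma Complex.one_sub_sq_le_norm_exp_two_mul {ξ : ℂ} {t : ℝ} (hξ : ‖ξ‖ ≤ t) (ht : t ≤ 1) :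
    (1 - t) ^ 2 ≤ ‖exp (2 * ξ)‖ := by
  have hre : -t ≤ ξ.re := (neg_le_neg hξ).trans (neg_le_of_abs_le (abs_re_le_norm ξ))
  calc (1 - t) ^ 2 ≤ Real.exp (-t) ^ 2 :=
        pow_le_pow_left₀ (by linarith) (by linarith [Real.add_one_le_exp (-t)]) 2
    _ = Real.exp (2 * (-t)) := by rw [← Real.exp_nat_mul]; norm_num
    _ ≤ ‖exp (2 * ξ)‖ := by
        rw [norm_exp, show (2 * ξ).re = 2 * ξ.re by simp]
        exact Real.exp_le_exp.2 (by linarith)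

lemma Complex.one_sub_pow_four_le_re_exp_two_mul {ξ : ℂ} {t : ℝ} (hξ : ‖ξ‖ ≤ t) (ht : t ≤ 2 / 3) :
    (1 - t) ^ 4 ≤ (exp (2 * ξ)).re := by
  have him : ξ.im ^ 2 ≤ t ^ 2 := sq_le_sq' (by linarith [neg_abs_le ξ.im, abs_im_le_norm ξ])
    ((le_abs_self _).trans ((abs_im_le_norm ξ).trans hξ))
  have hcos : (1 - t) ^ 2 ≤ Real.cos (2 * ξ.im) := by
    nlinarith [Real.one_sub_sq_div_two_le_cos (x := 2 * ξ.im), (norm_nonneg ξ).trans hξ]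
  have hexp : (1 - t) ^ 2 ≤ Real.exp (2 * ξ.re) := by
    simpa [norm_exp] using one_sub_sq_le_norm_exp_two_mul hξ (by linarith)
  rw [exp_re, show (2 * ξ).re = 2 * ξ.re by simp, show (2 * ξ).im = 2 * ξ.im by simp]
  calc (1 - t) ^ 4 = (1 - t) ^ 2 * (1 - t) ^ 2 := by ring
    _ ≤ Real.exp (2 * ξ.re) * Real.cos (2 * ξ.im) :=
        mul_le_mul hexp hcos (sq_nonneg _) (Real.exp_pos _).le

lemma Real.exp_le_one_add_two_mul {x : ℝ} (hx₀ : 0 ≤ x) (hx₁ : x ≤ 1 / 2) :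
    Real.exp x ≤ 1 + 2 * x := by
  calc Real.exp x ≤ 1 / (1 - x) := Real.exp_bound_div_one_sub_of_interval hx₀ (by linarith)
    _ ≤ 1 + 2 * x := by
        rw [div_le_iff₀ (by linarith)]
        nlinarith

lemma Complex.norm_exp_two_mul_le {ξ : ℂ} {t : ℝ} (hξ : ‖ξ‖ ≤ t) (ht : t ≤ 1 / 2) :
    ‖exp (2 * ξ)‖ ≤ (1 + 2 * t) ^ 2 := by
  have ht₀ : 0 ≤ t := (norm_nonneg ξ).trans hξ
  calc ‖exp (2 * ξ)‖ = Real.exp ξ.re ^ 2 := by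
        rw [norm_exp, ← Real.exp_nat_mul]; norm_num
    _ ≤ Real.exp t ^ 2 := by
        gcongr
        exact (le_abs_self _).trans ((abs_re_le_norm ξ).trans hξ)
    _ ≤ (1 + 2 * t) ^ 2 :=
        pow_le_pow_left₀ (Real.exp_pos t).le (Real.exp_le_one_add_two_mul ht₀ ht) 2

lemma Real.mul_sqrt_le_sqrt {c x y : ℝ} (hc : 0 ≤ c) (h : c ^ 2 * x ≤ y) : c * √x ≤ √y := by
  rw [← Real.sqrt_sq hc, ← Real.sqrt_mul (sq_nonneg c)]
  exact Real.sqrt_le_sqrt h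

lemma Real.sqrt_le_mul_sqrt {c x y : ℝ} (hc : 0 ≤ c) (h : y ≤ c ^ 2 * x) : √y ≤ c * √x := by
  rw [← Real.sqrt_sq hc, ← Real.sqrt_mul (sq_nonneg c)]
  exact Real.sqrt_le_sqrt h

theorem stmt_1_general (ξ₀ : ℝ) (ξ : ℂ) (h1 : ξ₀ < 1/2) (h2 : ‖ξ‖ < ξ₀)
    (m p : ℝ) (θ : ℂ) (hθ : θ = Complex.exp ξ) :
    (1 - ξ₀) * Real.sqrt (p ^ 2 + m ^ 2) ≤
      ‖((p : ℂ) ^ 2 + (m : ℂ) ^ 2 * θ ^ 2) ^ ((1 : ℂ) / 2)‖ ∧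
    ‖((p : ℂ) ^ 2 + (m : ℂ) ^ 2 * θ ^ 2) ^ ((1 : ℂ) / 2)‖ ≤
      (1 + 2 * ξ₀) * Real.sqrt (p ^ 2 + m ^ 2) := by
  have hξ : ‖ξ‖ ≤ ξ₀ := h2.le
  have hξ₀ : 0 ≤ ξ₀ := (norm_nonneg ξ).trans hξ
  have hz : (p : ℂ) ^ 2 + (m : ℂ) ^ 2 * θ ^ 2 =
      ((p ^ 2 : ℝ) : ℂ) + ((m ^ 2 : ℝ) : ℂ) * exp (2 * ξ) := by
    rw [hθ, ← exp_nat_mul]; push_cast; ring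
  rw [hz, norm_cpow_one_half]
  constructor
  · refine Real.mul_sqrt_le_sqrt (by linarith) ?_
    exact mul_add_le_norm_ofReal_add_ofReal_mul (sq_nonneg p) (sq_nonneg m) (sq_nonneg _)
      (by nlinarith)
      (by simpa [← pow_mul] using one_sub_pow_four_le_re_exp_two_mul hξ (by linarith))
      (one_sub_sq_le_norm_exp_two_mul hξ (by linarith))
  · refine Real.sqrt_le_mul_sqrt (by linarith) ?_
    exact norm_ofReal_add_ofReal_mul_le (sq_nonneg p) (sq_nonneg m) (by nlinarith)
      (norm_exp_two_mul_le hξ h1.le)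

theorem stmt_1 (ξ₀ : ℝ) (ξ : ℂ) (h0 : 0 < ξ₀) (h1 : ξ₀ < 1/2) (h2 : ‖ξ‖ < ξ₀)
    (m p : ℝ) (hm : 0 < m) (hp : 0 ≤ p) (θ : ℂ) (hθ : θ = Complex.exp ξ) :
    (1 - ξ₀) * Real.sqrt (p ^ 2 + m ^ 2) ≤
      ‖((p : ℂ) ^ 2 + (m : ℂ) ^ 2 * θ ^ 2) ^ ((1 : ℂ) / 2)‖ ∧
    ‖((p : ℂ) ^ 2 + (m : ℂ) ^ 2 * θ ^ 2) ^ ((1 : ℂ) / 2)‖ ≤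
      (1 + 2 * ξ₀) * Real.sqrt (p ^ 2 + m ^ 2) :=
  stmt_1_general ξ₀ ξ h1 h2 m p θ hθ
end

section
/- For complex θ = e^ξ with |Im ξ| < π/4, and for all p ≥ 0, m > 0, one has Re √(p² + m²θ²) ≥ p·cos(Im ξ). -/
/-!
Since `|Im ξ| < π/4`, the real part `e^{2 Re ξ} cos (2 Im ξ)` of `θ²` is nonnegative, so
`Re (p² + m²θ²) ≥ p²`. The principal square root satisfies `Re √z ≥ √(Re z)`, whence
`Re √(p² + m²θ²) ≥ |p| ≥ p cos (Im ξ)`.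
-/

namespace Complex

theorem sqrt_re_le_cpow_inv_two_re (z : ℂ) : √z.re ≤ (z ^ (2⁻¹ : ℂ)).re := by
  rw [cpow_inv_two_re]
  exact Real.sqrt_le_sqrt (by linarith [re_le_norm z])

theorem exp_sq_re_nonneg {ξ : ℂ} (hξ : |ξ.im| ≤ Real.pi / 4) : 0 ≤ (exp ξ ^ 2).re := by
  rw [← exp_nat_mul, exp_re]
  refine mul_nonneg (Real.exp_pos _).le (Real.cos_nonneg_of_mem_Icc ?_)
  obtain ⟨hlo, hhi⟩ := abs_le.mp hξ
  constructor <;> simp only [Nat.cast_ofNat, mul_im, re_ofNat, im_ofNat, zero_mul, add_zero] <;>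
    linarith

end Complex

theorem stmt_2_general (ξ : ℂ) (hξ : |ξ.im| < Real.pi / 4) (m p : ℝ)
    (θ : ℂ) (hθ : θ = Complex.exp ξ) :
    p * Real.cos ξ.im ≤ (((p : ℂ) ^ 2 + (m : ℂ) ^ 2 * θ ^ 2) ^ ((1 : ℂ) / 2)).re := by
  have hre : p ^ 2 ≤ ((p : ℂ) ^ 2 + (m : ℂ) ^ 2 * θ ^ 2).re := by
    have hθ2 := hθ ▸ Complex.exp_sq_re_nonneg hξ.le
    rw [← Complex.ofReal_pow, ← Complex.ofReal_pow, Complex.add_re, Complex.re_ofReal_mul,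
      Complex.ofReal_re]
    exact le_add_of_nonneg_right (mul_nonneg (sq_nonneg m) hθ2)
  calc p * Real.cos ξ.im ≤ |p| * |Real.cos ξ.im| := (le_abs_self _).trans_eq (abs_mul _ _)
    _ ≤ |p| := mul_le_of_le_one_right (abs_nonneg p) (Real.abs_cos_le_one _)
    _ = √(p ^ 2) := (Real.sqrt_sq_eq_abs p).symm
    _ ≤ √((p : ℂ) ^ 2 + (m : ℂ) ^ 2 * θ ^ 2).re := Real.sqrt_le_sqrt hre
    _ ≤ _ := one_div (2 : ℂ) ▸ Complex.sqrt_re_le_cpow_inv_two_re _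

theorem stmt_2 (ξ : ℂ) (hξ : |ξ.im| < Real.pi / 4) (m p : ℝ) (hm : 0 < m) (hp : 0 ≤ p)
    (θ : ℂ) (hθ : θ = Complex.exp ξ) :
    p * Real.cos ξ.im ≤ (((p : ℂ) ^ 2 + (m : ℂ) ^ 2 * θ ^ 2) ^ ((1 : ℂ) / 2)).re :=
  stmt_2_general ξ hξ m p θ hθ
end

section
/- For complex θ = e^ξ with |ξ| < ξ₀ < 1/2, and all p, p' ≥ 0, m > 0: |1/(E_θ(p) + E_θ(p'))| ≤ (1 - ξ₀)^{-3} · 1/(E_p + E_{p'}), where E_θ(q) = √(q² + m²θ²) (principal branch) and E_q = √(q² + m²). -/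
/-!
Since `Re (e^{2ξ}) ≥ (1 - ξ₀)^6`, the real part of `q² + m²θ²` is at least `(1 - ξ₀)^6 (q² + m²)`.
The principal square root satisfies `Re √z ≥ √(Re z)`, so `Re E_θ(q) ≥ (1 - ξ₀)^3 E_q`, and
`|E_θ(p) + E_θ(p')| ≥ Re (E_θ(p) + E_θ(p')) ≥ (1 - ξ₀)^3 (E_p + E_{p'})`.
-/

open Complex
open scoped Real

lemma Complex.sqrt_re_le_re_cpow_inv_two (z : ℂ) : √z.re ≤ (z ^ (2⁻¹ : ℂ)).re := by
  rw [cpow_inv_two_re]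
  exact Real.sqrt_le_sqrt (by linarith [re_le_norm z])

lemma Complex.exp_neg_mul_cos_le_re_exp {w : ℂ} {r : ℝ} (hwr : ‖w‖ ≤ r) (hr : r ≤ π / 2) :
    Real.exp (-r) * Real.cos r ≤ (exp w).re := by
  have hexp : Real.exp (-r) ≤ Real.exp w.re :=
    Real.exp_le_exp.2 (by linarith [neg_abs_le w.re, abs_re_le_norm w])
  have hcos : Real.cos r ≤ Real.cos w.im := by
    rw [← Real.cos_abs w.im]
    exact Real.cos_le_cos_of_nonneg_of_le_pi (abs_nonneg _) (by linarith [Real.pi_pos])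
      ((abs_im_le_norm w).trans hwr)
  rw [exp_re]
  exact mul_le_mul hexp hcos (Real.cos_nonneg_of_neg_pi_div_two_le_of_le (by linarith [norm_nonneg w]) hr)
    (Real.exp_nonneg _)

lemma one_sub_pow_six_le_exp_neg_mul_cos {x : ℝ} (hx₀ : 0 ≤ x) (hx : x ≤ 1 / 2) :
    (1 - x) ^ 6 ≤ Real.exp (-(2 * x)) * Real.cos (2 * x) := by
  have hexp : (1 - x) ^ 2 ≤ Real.exp (-(2 * x)) := by
    calc (1 - x) ^ 2 ≤ Real.exp (-x) ^ 2 := by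
          gcongr
          · linarith
          · linarith [Real.add_one_le_exp (-x)]
      _ = Real.exp (-(2 * x)) := by rw [← Real.exp_nat_mul]; ring_nf
  have hcos : (1 - x) ^ 4 ≤ Real.cos (2 * x) := by
    have hpoly : 0 ≤ x * (4 * (1 - x) ^ 2 - x ^ 3) := by
      apply mul_nonneg hx₀
      nlinarith [pow_le_pow_left₀ hx₀ hx 3]
    nlinarith [Real.one_sub_sq_div_two_le_cos (x := 2 * x)]
  calc (1 - x) ^ 6 = (1 - x) ^ 2 * (1 - x) ^ 4 := by ring
    _ ≤ Real.exp (-(2 * x)) * Real.cos (2 * x) :=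
        mul_le_mul hexp hcos (by positivity) (Real.exp_nonneg _)

lemma one_sub_pow_six_le_re_exp_two_mul {ξ₀ : ℝ} {ξ : ℂ} (h1 : ξ₀ < 1 / 2) (h2 : ‖ξ‖ < ξ₀) :
    (1 - ξ₀) ^ 6 ≤ (exp (2 * ξ)).re := by
  have h0 : 0 ≤ ξ₀ := (norm_nonneg ξ).trans h2.le
  refine (one_sub_pow_six_le_exp_neg_mul_cos h0 h1.le).trans
    (exp_neg_mul_cos_le_re_exp ?_ (by linarith [Real.pi_gt_three]))
  rw [norm_mul, Complex.norm_two]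
  linarith

lemma mul_sqrt_le_re_cpow_inv_two {θ : ℂ} {c : ℝ} (hc : 0 ≤ c) (hc1 : c ^ 2 ≤ 1)
    (hθ : c ^ 2 ≤ (θ ^ 2).re) (q m : ℝ) :
    c * √(q ^ 2 + m ^ 2) ≤ (((q : ℂ) ^ 2 + (m : ℂ) ^ 2 * θ ^ 2) ^ (2⁻¹ : ℂ)).re := by
  refine le_trans ?_ (sqrt_re_le_re_cpow_inv_two _)
  have hre : ((q : ℂ) ^ 2 + (m : ℂ) ^ 2 * θ ^ 2).re = q ^ 2 + m ^ 2 * (θ ^ 2).re := by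
    rw [← ofReal_pow, ← ofReal_pow, add_re, ofReal_re, re_ofReal_mul]
  rw [← Real.sqrt_sq hc, ← Real.sqrt_mul (sq_nonneg c), hre]
  apply Real.sqrt_le_sqrt
  nlinarith [sq_nonneg q, sq_nonneg m, mul_le_mul_of_nonneg_left hθ (sq_nonneg m)]

theorem stmt_3_general (ξ₀ : ℝ) (ξ : ℂ) (h1 : ξ₀ < 1/2) (h2 : ‖ξ‖ < ξ₀)
    (m p p' : ℝ) (hm : 0 < m)
    (θ : ℂ) (hθ : θ = Complex.exp ξ) :
    ‖1 / (((p : ℂ) ^ 2 + (m : ℂ) ^ 2 * θ ^ 2) ^ ((1 : ℂ) / 2) +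
          ((p' : ℂ) ^ 2 + (m : ℂ) ^ 2 * θ ^ 2) ^ ((1 : ℂ) / 2))‖ ≤
      (1 - ξ₀) ^ (-3 : ℤ) * (1 / (Real.sqrt (p ^ 2 + m ^ 2) + Real.sqrt (p' ^ 2 + m ^ 2))) := by
  rw [one_div (2 : ℂ)]
  have hξ₀ : 0 < 1 - ξ₀ := by linarith
  have hθ2 : ((1 - ξ₀) ^ 3) ^ 2 ≤ (θ ^ 2).re := by
    rw [hθ, ← exp_nat_mul, ← pow_mul]
    exact_mod_cast one_sub_pow_six_le_re_exp_two_mul h1 h2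
  have hc1 : ((1 - ξ₀) ^ 3) ^ 2 ≤ 1 :=
    pow_le_one₀ (by positivity) (pow_le_one₀ hξ₀.le (by linarith [(norm_nonneg ξ).trans h2.le]))
  have hsum : (1 - ξ₀) ^ 3 * (√(p ^ 2 + m ^ 2) + √(p' ^ 2 + m ^ 2)) ≤
      ‖((p : ℂ) ^ 2 + (m : ℂ) ^ 2 * θ ^ 2) ^ (2⁻¹ : ℂ) +
        ((p' : ℂ) ^ 2 + (m : ℂ) ^ 2 * θ ^ 2) ^ (2⁻¹ : ℂ)‖ := by
    rw [mul_add]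
    refine le_trans ?_ (re_le_norm _)
    rw [add_re]
    exact add_le_add (mul_sqrt_le_re_cpow_inv_two (by positivity) hc1 hθ2 p m)
      (mul_sqrt_le_re_cpow_inv_two (by positivity) hc1 hθ2 p' m)
  rw [zpow_neg, zpow_ofNat, norm_div, norm_one, one_div, one_div, ← mul_inv]
  exact inv_anti₀ (by positivity) hsum

theorem stmt_3 (ξ₀ : ℝ) (ξ : ℂ) (h0 : 0 < ξ₀) (h1 : ξ₀ < 1/2) (h2 : ‖ξ‖ < ξ₀)
    (m p p' : ℝ) (hm : 0 < m) (hp : 0 ≤ p) (hp' : 0 ≤ p')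
    (θ : ℂ) (hθ : θ = Complex.exp ξ) :
    ‖1 / (((p : ℂ) ^ 2 + (m : ℂ) ^ 2 * θ ^ 2) ^ ((1 : ℂ) / 2) +
          ((p' : ℂ) ^ 2 + (m : ℂ) ^ 2 * θ ^ 2) ^ ((1 : ℂ) / 2))‖ ≤
      (1 - ξ₀) ^ (-3 : ℤ) * (1 / (Real.sqrt (p ^ 2 + m ^ 2) + Real.sqrt (p' ^ 2 + m ^ 2))) :=
  stmt_3_general ξ₀ ξ h1 h2 m p p' hm θ hθ
end

section
/- Let A(p) = √((E_p + m)/(2E_p)) with E_p = √(p² + m²), and let A_θ(p) be its dilated version with m replaced by mθ, θ = e^ξ, |ξ| < ξ₀ < 1/2 (principal branches). Then |A_θ(p)|² ≤ ((1 + 2ξ₀)/(1 - ξ₀)) · A(p)². -/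
/-! With `z = p² + m²θ²` we have `‖E_θ‖ = √‖z‖`. Since `θ² = e^{2ξ}` has modulus at least
`(1 - ξ₀)²` and real part at least `(1 - ξ₀)⁴`, expanding `‖z‖²` termwise gives
`‖z‖ ≥ (1 - ξ₀)² E_p²`, so `‖E_θ‖ ≥ (1 - ξ₀) E_p`. In the other direction `‖θ‖ ≤ e^{ξ₀} ≤ 1 + 2ξ₀`
bounds both `‖E_θ‖` and `‖mθ‖`, so `‖E_θ + mθ‖ ≤ (1 + 2ξ₀)(E_p + m)`. -/

open Complex

lemma Real.exp_le_one_add_two_mul_s4 {t : ℝ} (h0 : 0 ≤ t) (h : t ≤ 1 / 2) :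
    Real.exp t ≤ 1 + 2 * t :=
  calc Real.exp t ≤ 1 / (1 - t) := Real.exp_bound_div_one_sub_of_interval h0 (by linarith)
    _ ≤ 1 + 2 * t := by rw [div_le_iff₀ (by linarith)]; nlinarith

namespace Complex

variable {ξ : ℂ} {r : ℝ}

lemma norm_exp_le_one_add_two_mul (hξ : ‖ξ‖ ≤ r) (hr : r ≤ 1 / 2) : ‖exp ξ‖ ≤ 1 + 2 * r :=
  (norm_exp_le_exp_norm ξ).trans <|
    (Real.exp_le_exp.2 hξ).trans (Real.exp_le_one_add_two_mul_s4 ((norm_nonneg ξ).trans hξ) hr)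

lemma one_sub_le_exp_re (hξ : ‖ξ‖ ≤ r) : 1 - r ≤ Real.exp ξ.re := by
  have hre : -r ≤ ξ.re := neg_le_of_abs_le ((abs_re_le_norm ξ).trans hξ)
  linarith [Real.add_one_le_exp ξ.re]

lemma one_sub_sq_le_norm_exp_sq (hξ : ‖ξ‖ ≤ r) (hr : r ≤ 1) : (1 - r) ^ 2 ≤ ‖exp ξ ^ 2‖ := by
  rw [norm_pow, norm_exp]
  exact pow_le_pow_left₀ (by linarith) (one_sub_le_exp_re hξ) 2

lemma one_sub_pow_four_le_re_exp_sq (hξ : ‖ξ‖ ≤ r) (hr : r ≤ 2 / 3) :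
    (1 - r) ^ 4 ≤ (exp ξ ^ 2).re := by
  have hr0 : 0 ≤ r := (norm_nonneg ξ).trans hξ
  have hexp : (1 - r) ^ 2 ≤ Real.exp (2 * ξ.re) := by
    rw [two_mul, Real.exp_add, ← sq]
    exact pow_le_pow_left₀ (by linarith) (one_sub_le_exp_re hξ) 2
  have hcos : (1 - r) ^ 2 ≤ Real.cos (2 * ξ.im) := by
    have him : ξ.im ^ 2 ≤ r ^ 2 := sq_le_sq' (neg_le_of_abs_le ((abs_im_le_norm ξ).trans hξ))
      (le_of_abs_le ((abs_im_le_norm ξ).trans hξ))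
    nlinarith [Real.one_sub_sq_div_two_le_cos (x := 2 * ξ.im)]
  have hsq : exp ξ ^ 2 = exp (2 * ξ) := by rw [sq, ← exp_add, two_mul]
  rw [hsq, exp_re]
  simp only [mul_re, mul_im, re_ofNat, im_ofNat, zero_mul, sub_zero, add_zero]
  calc (1 - r) ^ 4 = (1 - r) ^ 2 * (1 - r) ^ 2 := by ring
    _ ≤ _ := mul_le_mul hexp hcos (sq_nonneg _) (Real.exp_pos _).le

lemma mul_add_le_norm_sq_add_sq_mul {a b c : ℝ} {w : ℂ} (hc0 : 0 ≤ c) (hc1 : c ≤ 1)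
    (hre : c ^ 2 ≤ w.re) (hw : c ≤ ‖w‖) :
    c * (a ^ 2 + b ^ 2) ≤ ‖(a : ℂ) ^ 2 + (b : ℂ) ^ 2 * w‖ := by
  refine abs_le_of_sq_le_sq' ?_ (norm_nonneg _) |>.2
  have hw2 : c ^ 2 ≤ w.re ^ 2 + w.im ^ 2 := by
    rw [sq w.re, sq w.im, ← normSq_apply, ← Complex.sq_norm]
    exact pow_le_pow_left₀ hc0 hw 2
  rw [Complex.sq_norm, normSq_apply]
  simp only [← ofReal_pow, add_re, add_im, ofReal_re, ofReal_im, re_ofReal_mul, im_ofReal_mul,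
    zero_add]
  nlinarith [sq_nonneg a, sq_nonneg b, mul_nonneg (sq_nonneg a) (sq_nonneg b),
    mul_le_mul_of_nonneg_left hre (mul_nonneg (sq_nonneg a) (sq_nonneg b)),
    mul_le_mul_of_nonneg_left hw2 (sq_nonneg (b ^ 2)),
    mul_le_mul_of_nonneg_left (pow_le_one₀ hc0 hc1 : c ^ 2 ≤ 1) (sq_nonneg (a ^ 2))]

lemma norm_sq_add_sq_mul_le {a b K : ℝ} {w : ℂ} (hK : 1 ≤ K) (hw : ‖w‖ ≤ K) :
    ‖(a : ℂ) ^ 2 + (b : ℂ) ^ 2 * w‖ ≤ K * (a ^ 2 + b ^ 2) := by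
  calc ‖(a : ℂ) ^ 2 + (b : ℂ) ^ 2 * w‖ ≤ a ^ 2 + b ^ 2 * ‖w‖ := by
        have h := norm_add_le ((a : ℂ) ^ 2) ((b : ℂ) ^ 2 * w)
        rwa [norm_mul, norm_pow, norm_pow, norm_real, norm_real, Real.norm_eq_abs,
          Real.norm_eq_abs, sq_abs, sq_abs] at h
    _ ≤ K * (a ^ 2 + b ^ 2) := by
        nlinarith [sq_nonneg a, mul_le_mul_of_nonneg_left hw (sq_nonneg b)]

lemma norm_cpow_one_half_s4 (z : ℂ) : ‖z ^ ((1 : ℂ) / 2)‖ = √‖z‖ := by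
  rw [Real.sqrt_eq_rpow, ← norm_cpow_real]
  norm_num

end Complex

theorem stmt_4_general (ξ₀ : ℝ) (ξ : ℂ) (h1 : ξ₀ < 1/2) (h2 : ‖ξ‖ < ξ₀)
    (m p : ℝ) (hm : 0 < m) (θ : ℂ) (hθ : θ = Complex.exp ξ)
    (Ep : ℝ) (hEp : Ep = Real.sqrt (p ^ 2 + m ^ 2))
    (Eθ : ℂ) (hEθ : Eθ = ((p : ℂ) ^ 2 + (m : ℂ) ^ 2 * θ ^ 2) ^ ((1 : ℂ) / 2)) :
    ‖(Eθ + (m : ℂ) * θ) / (2 * Eθ)‖ ≤ (1 + 2 * ξ₀) / (1 - ξ₀) * ((Ep + m) / (2 * Ep)) := by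
  have hξ : ‖ξ‖ ≤ ξ₀ := h2.le
  have hξ₀ : 0 < ξ₀ := (norm_nonneg ξ).trans_lt h2
  have hEp_pos : 0 < Ep := hEp ▸ Real.sqrt_pos.2 (by positivity)
  have hθK : ‖θ‖ ≤ 1 + 2 * ξ₀ := hθ ▸ norm_exp_le_one_add_two_mul hξ h1.le
  have hden : (1 - ξ₀) * Ep ≤ ‖Eθ‖ := by
    have hz := mul_add_le_norm_sq_add_sq_mul (a := p) (b := m) (w := θ ^ 2)
      (sq_nonneg (1 - ξ₀)) (pow_le_one₀ (by linarith) (by linarith))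
      (by rw [← pow_mul]; exact hθ ▸ one_sub_pow_four_le_re_exp_sq hξ (by linarith))
      (hθ ▸ one_sub_sq_le_norm_exp_sq hξ (by linarith))
    rw [hEθ, norm_cpow_one_half_s4, hEp, ← Real.sqrt_sq (by linarith : 0 ≤ 1 - ξ₀), ← Real.sqrt_mul']
    exacts [Real.sqrt_le_sqrt hz, by positivity]
  have hEθK : ‖Eθ‖ ≤ (1 + 2 * ξ₀) * Ep := by
    have hz := norm_sq_add_sq_mul_le (a := p) (b := m) (w := θ ^ 2) (K := (1 + 2 * ξ₀) ^ 2)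
      (one_le_pow₀ (by linarith)) (by rw [norm_pow]; gcongr)
    rw [hEθ, norm_cpow_one_half_s4, hEp, ← Real.sqrt_sq (by linarith : 0 ≤ 1 + 2 * ξ₀),
      ← Real.sqrt_mul']
    exacts [Real.sqrt_le_sqrt hz, by positivity]
  have hnum : ‖Eθ + (m : ℂ) * θ‖ ≤ (1 + 2 * ξ₀) * (Ep + m) := by
    calc ‖Eθ + (m : ℂ) * θ‖ ≤ ‖Eθ‖ + m * ‖θ‖ := by
          simpa [norm_mul, abs_of_pos hm] using norm_add_le Eθ ((m : ℂ) * θ)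
      _ ≤ (1 + 2 * ξ₀) * (Ep + m) := by nlinarith [mul_le_mul_of_nonneg_left hθK hm.le]
  rw [norm_div, norm_mul, Complex.norm_two]
  calc ‖Eθ + (m : ℂ) * θ‖ / (2 * ‖Eθ‖) ≤ (1 + 2 * ξ₀) * (Ep + m) / (2 * ((1 - ξ₀) * Ep)) :=
        div_le_div₀ (by positivity) hnum (by nlinarith) (by linarith)
    _ = (1 + 2 * ξ₀) / (1 - ξ₀) * ((Ep + m) / (2 * Ep)) := by
        field_simp

theorem stmt_4 (ξ₀ : ℝ) (ξ : ℂ) (h0 : 0 < ξ₀) (h1 : ξ₀ < 1/2) (h2 : ‖ξ‖ < ξ₀)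
    (m p : ℝ) (hm : 0 < m) (hp : 0 ≤ p) (θ : ℂ) (hθ : θ = Complex.exp ξ)
    (Ep : ℝ) (hEp : Ep = Real.sqrt (p ^ 2 + m ^ 2))
    (Eθ : ℂ) (hEθ : Eθ = ((p : ℂ) ^ 2 + (m : ℂ) ^ 2 * θ ^ 2) ^ ((1 : ℂ) / 2)) :
    ‖(Eθ + (m : ℂ) * θ) / (2 * Eθ)‖ ≤ (1 + 2 * ξ₀) / (1 - ξ₀) * ((Ep + m) / (2 * Ep)) :=
  stmt_4_general ξ₀ ξ h1 h2 m p hm θ hθ Ep hEp Eθ hEθ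
end

section
/- Let g(p) = 1/√(2E_p(E_p + m)) and g_θ(p) its dilation (m ↦ mθ, p ↦ p/θ appropriately), θ = e^ξ, |ξ| < ξ₀ < 1/2. Then |(p/θ)·g_θ(p)|² ≤ (1 - ξ₀)^{-4} · p²·g(p)². -/
/-!
Write `ξ = a + b i`, so `θ = e^a e^{ib}`. Using only `1 + a ≤ e^a`, `1 - b²/2 ≤ cos b` and
`a² + b² ≤ ξ₀²`, both `Re θ = e^a cos b` and `cos b = Re θ / |θ|` are at least `1 - ξ₀`.
The principal root satisfies `2 (Re √z)² = |z| + Re z`, and testing `z = p² + m²θ²` against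
`θ̄²` gives `|z| + Re z ≥ 2 cos² b · p² + 2 (Re θ)² m²`, whence `Re E_θ ≥ (1 - ξ₀) E_p`.
Then each of `|θ|`, `|E_θ|`, `|E_θ + mθ|` is bounded below by its real part, which loses at
most a factor `1 - ξ₀` against `1`, `E_p`, `E_p + m`; four such factors give `(1 - ξ₀)⁻⁴`.
-/

lemma Real.one_sub_le_cos {b r : ℝ} (hb : |b| ≤ r) (hr : r ≤ 2) : 1 - r ≤ Real.cos b := by
  have hb2 : b ^ 2 ≤ r ^ 2 := sq_le_sq' (neg_le_of_abs_le hb) (le_of_abs_le hb)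
  nlinarith [Real.one_sub_sq_div_two_le_cos (x := b), abs_nonneg b]

lemma Complex.one_sub_le_re_exp {ξ : ℂ} {r : ℝ} (hξ : ‖ξ‖ ≤ r) (hr : r ≤ 1 / 2) :
    1 - r ≤ (Complex.exp ξ).re := by
  set a := ξ.re
  set b := ξ.im
  have ha : |a| ≤ r := (Complex.abs_re_le_norm ξ).trans hξ
  have hab : a ^ 2 + b ^ 2 ≤ r ^ 2 := by
    have h := Complex.sq_norm ξ
    rw [Complex.normSq_apply] at h
    nlinarith [pow_le_pow_left₀ (norm_nonneg ξ) hξ 2]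
  obtain ⟨har, hra⟩ := abs_le.1 ha
  have hcos : 1 - (r ^ 2 - a ^ 2) / 2 ≤ Real.cos b := by
    linarith [Real.one_sub_sq_div_two_le_cos (x := b)]
  -- `(1 + a) * (1 - (r ^ 2 - a ^ 2) / 2) - (1 - r) = (a + r) * (1 + (a - r) * (1 + a) / 2)`
  have hpoly : 1 - r ≤ (1 + a) * (1 - (r ^ 2 - a ^ 2) / 2) := by
    nlinarith [mul_nonneg (by linarith : 0 ≤ a + r) (by linarith : 0 ≤ r - a),
      mul_nonneg (mul_nonneg (by linarith : 0 ≤ a + r) (by linarith : 0 ≤ r - a))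
        (by linarith : 0 ≤ 1 + a)]
  rw [Complex.exp_re]
  calc 1 - r ≤ (1 + a) * (1 - (r ^ 2 - a ^ 2) / 2) := hpoly
    _ ≤ Real.exp a * Real.cos b :=
      mul_le_mul (by linarith [Real.add_one_le_exp a]) hcos (by nlinarith) (Real.exp_pos a).le

lemma Complex.le_norm_add_re_ofReal_add_mul_sq (x y : ℝ) (θ : ℂ) :
    2 * (θ.re / ‖θ‖) ^ 2 * x + 2 * θ.re ^ 2 * y ≤
      ‖(x : ℂ) + y * θ ^ 2‖ + ((x : ℂ) + y * θ ^ 2).re := by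
  rcases eq_or_ne θ 0 with rfl | hθ
  · simpa [Real.norm_eq_abs, neg_le_iff_add_nonneg'] using neg_abs_le x
  have hn : 0 < ‖θ‖ := norm_pos_iff.2 hθ
  set z : ℂ := x + y * θ ^ 2
  have hprod :
      z * (starRingEnd ℂ) (θ ^ 2) = x * (starRingEnd ℂ) (θ ^ 2) + (y * ‖θ‖ ^ 4 : ℝ) := by
    rw [add_mul, mul_assoc, Complex.mul_conj, Complex.normSq_eq_norm_sq, norm_pow]
    push_cast
    ring
  have hkey : x * (θ ^ 2).re + y * ‖θ‖ ^ 4 ≤ ‖z‖ * ‖θ‖ ^ 2 := by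
    have h := Complex.re_le_norm (z * (starRingEnd ℂ) (θ ^ 2))
    rwa [norm_mul, Complex.norm_conj, norm_pow, hprod, Complex.add_re, Complex.re_ofReal_mul,
      Complex.conj_re, Complex.ofReal_re] at h
  have hN : x * (θ ^ 2).re / ‖θ‖ ^ 2 + y * ‖θ‖ ^ 2 ≤ ‖z‖ := by
    rw [div_add' _ _ _ (by positivity), div_le_iff₀ (by positivity)]
    linarith
  have hθ2 : (θ ^ 2).re = 2 * θ.re ^ 2 - ‖θ‖ ^ 2 := by
    rw [Complex.sq_norm, Complex.normSq_apply, pow_two, Complex.mul_re]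
    ring
  have hre : z.re = x + y * (θ ^ 2).re := by simp [z]
  calc 2 * (θ.re / ‖θ‖) ^ 2 * x + 2 * θ.re ^ 2 * y
      = x * (θ ^ 2).re / ‖θ‖ ^ 2 + y * ‖θ‖ ^ 2 + (x + y * (θ ^ 2).re) := by
        rw [hθ2]
        field_simp
        ring
    _ ≤ ‖z‖ + z.re := by rw [hre]; linarith

theorem stmt_5_general (ξ₀ : ℝ) (ξ : ℂ) (h1 : ξ₀ < 1/2) (h2 : ‖ξ‖ < ξ₀)
    (m p : ℝ) (hm : 0 < m) (θ : ℂ) (hθ : θ = Complex.exp ξ)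
    (Ep : ℝ) (hEp : Ep = Real.sqrt (p ^ 2 + m ^ 2))
    (Eθ : ℂ) (hEθ : Eθ = ((p : ℂ) ^ 2 + (m : ℂ) ^ 2 * θ ^ 2) ^ ((1 : ℂ) / 2)) :
    ‖((p : ℂ) / θ) ^ 2 * (1 / (2 * Eθ * (Eθ + (m : ℂ) * θ)))‖ ≤
      (1 - ξ₀) ^ (-4 : ℤ) * (p ^ 2 * (1 / (2 * Ep * (Ep + m)))) := by
  set k := 1 - ξ₀
  have hk : 0 < k := by linarith
  have hθre : k ≤ θ.re := hθ ▸ Complex.one_sub_le_re_exp h2.le h1.le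
  have hθcos : k ≤ θ.re / ‖θ‖ := by
    rw [hθ, Complex.exp_re, Complex.norm_exp, mul_div_cancel_left₀ _ (Real.exp_pos _).ne']
    exact Real.one_sub_le_cos ((Complex.abs_im_le_norm ξ).trans h2.le) (by linarith)
  have hEp_pos : 0 < Ep := hEp ▸ Real.sqrt_pos.2 (by positivity)
  have hEθre : k * Ep ≤ Eθ.re := by
    rw [hEθ, one_div, Complex.cpow_inv_two_re]
    apply Real.le_sqrt_of_sq_le
    have h := Complex.le_norm_add_re_ofReal_add_mul_sq (p ^ 2) (m ^ 2) θ
    push_cast at h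
    have hEp2 : Ep ^ 2 = p ^ 2 + m ^ 2 := hEp ▸ Real.sq_sqrt (by positivity)
    nlinarith [pow_le_pow_left₀ hk.le hθre 2, pow_le_pow_left₀ hk.le hθcos 2, sq_nonneg p,
      sq_nonneg m]
  have hθnorm : k ≤ ‖θ‖ := hθre.trans (Complex.re_le_norm θ)
  have hEθnorm : k * Ep ≤ ‖Eθ‖ := hEθre.trans (Complex.re_le_norm Eθ)
  have hsum : k * (Ep + m) ≤ ‖Eθ + m * θ‖ := by
    refine le_trans ?_ (Complex.re_le_norm _)
    rw [Complex.add_re, Complex.re_ofReal_mul]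
    nlinarith
  calc ‖((p : ℂ) / θ) ^ 2 * (1 / (2 * Eθ * (Eθ + (m : ℂ) * θ)))‖
      = p ^ 2 / ‖θ‖ ^ 2 * (1 / (2 * ‖Eθ‖ * ‖Eθ + m * θ‖)) := by
        simp [div_pow]
    _ ≤ p ^ 2 / k ^ 2 * (1 / (2 * (k * Ep) * (k * (Ep + m)))) := by gcongr
    _ = k ^ (-4 : ℤ) * (p ^ 2 * (1 / (2 * Ep * (Ep + m)))) := by
        rw [zpow_neg]
        field_simp

theorem stmt_5 (ξ₀ : ℝ) (ξ : ℂ) (h0 : 0 < ξ₀) (h1 : ξ₀ < 1/2) (h2 : ‖ξ‖ < ξ₀)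
    (m p : ℝ) (hm : 0 < m) (hp : 0 ≤ p) (θ : ℂ) (hθ : θ = Complex.exp ξ)
    (Ep : ℝ) (hEp : Ep = Real.sqrt (p ^ 2 + m ^ 2))
    (Eθ : ℂ) (hEθ : Eθ = ((p : ℂ) ^ 2 + (m : ℂ) ^ 2 * θ ^ 2) ^ ((1 : ℂ) / 2)) :
    ‖((p : ℂ) / θ) ^ 2 * (1 / (2 * Eθ * (Eθ + (m : ℂ) * θ)))‖ ≤
      (1 - ξ₀) ^ (-4 : ℤ) * (p ^ 2 * (1 / (2 * Ep * (Ep + m)))) :=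
  stmt_5_general ξ₀ ξ h1 h2 m p hm θ hθ Ep hEp Eθ hEθ
end

section
/- For a > 0, the integral ∫₀^∞ z^{-3/2} ln((1+z)/|1-z|) dz over (a, ∞) equals G_{-3/2}(a) := 2π − 2 ln|(√a+1)/(√a−1)| − 4 arctan√a + (2/√a)·ln|(1+a)/(1−a)| (for a ≠ 1), and in particular ∫₀^∞ z^{-3/2} ln((1+z)/|1-z|) dz = 2π. -/
open MeasureTheory

noncomputable def Gm32 (a : ℝ) : ℝ :=
  2 * Real.pi - 2 * Real.log |(Real.sqrt a + 1) / (Real.sqrt a - 1)| -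
    4 * Real.arctan (Real.sqrt a) + 2 / Real.sqrt a * Real.log |(1 + a) / (1 - a)|

/-!
An antiderivative of `z ^ (-3/2) * log ((1 + z) / |1 - z|)` is `F z = G (√z)`, where
`G s = (2 / s) * ((1 - s) log |1 - s| + (1 + s) log (1 + s) - log (1 + s²)) + 4 arctan s`.
Since `x log x` is continuous at `0`, `F` is continuous on `[0, ∞)` across the singularity at
`z = 1`; moreover `F 0 = 0` and `F → 2π` at infinity. The integrand is nonnegative, so the
fundamental theorem of calculus for improper integrals, applied on both sides of `z = 1`, gives
`∫_a^∞ = 2π - F a`, and for `a ≠ 1` the closed form of `F a` is `2π - G_{-3/2}(a)`.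
-/

open Set Filter Topology Real

theorem integral_Ioi_of_hasDerivAt_of_nonneg_of_ne {f F : ℝ → ℝ} {a c l : ℝ}
    (hF : ContinuousOn F (Ici a)) (hderiv : ∀ x ∈ Ioi a, x ≠ c → HasDerivAt F (f x) x)
    (hf : ∀ x ∈ Ioi a, x ≠ c → 0 ≤ f x) (hl : Tendsto F atTop (𝓝 l)) :
    ∫ x in Ioi a, f x = l - F a := by
  rcases le_or_gt c a with hca | hac
  · exact integral_Ioi_of_hasDerivAt_of_nonneg (hF a self_mem_Ici)
      (fun x hx => hderiv x hx (hca.trans_lt hx).ne') (fun x hx => hf x hx (hca.trans_lt hx).ne')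
      hl
  have hFc : ContinuousWithinAt F (Ici c) c := hF.mono (Ici_subset_Ici.2 hac.le) c self_mem_Ici
  have hderiv_Ioi : ∀ x ∈ Ioi c, HasDerivAt F (f x) x := fun x hx =>
    hderiv x (hac.trans hx) hx.ne'
  have hf_Ioi : ∀ x ∈ Ioi c, 0 ≤ f x := fun x hx => hf x (hac.trans hx) hx.ne'
  have hderiv_Ioo : ∀ x ∈ Ioo a c, HasDerivAt F (f x) x := fun x hx => hderiv x hx.1 hx.2.ne
  have hF_Icc : ContinuousOn F (Icc a c) := hF.mono Icc_subset_Ici_self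
  have hint : IntervalIntegrable f volume a c := by
    apply intervalIntegral.intervalIntegrable_deriv_of_nonneg (g := F)
    · rwa [uIcc_of_le hac.le]
    · rwa [min_eq_left hac.le, max_eq_right hac.le]
    · rw [min_eq_left hac.le, max_eq_right hac.le]
      exact fun x hx => hf x hx.1 hx.2.ne
  have hIoc : ∫ x in Ioc a c, f x = F c - F a := by
    rw [← intervalIntegral.integral_of_le hac.le]
    exact intervalIntegral.integral_eq_sub_of_hasDeriv_right_of_le hac.le hF_Icc
      (fun x hx => (hderiv_Ioo x hx).hasDerivWithinAt) hint
  rw [← Ioc_union_Ioi_eq_Ioi hac.le, setIntegral_union (Ioc_disjoint_Ioi le_rfl) measurableSet_Ioi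
    hint.1 (integrableOn_Ioi_deriv_of_nonneg hFc hderiv_Ioi hf_Ioi hl), hIoc,
    integral_Ioi_of_hasDerivAt_of_nonneg hFc hderiv_Ioi hf_Ioi hl]
  ring

noncomputable def logRatioIntegrand (z : ℝ) : ℝ := z ^ (-(3 : ℝ) / 2) * log ((1 + z) / |1 - z|)

noncomputable def mulLogSum (s : ℝ) : ℝ :=
  (1 - s) * log (1 - s) + (1 + s) * log (1 + s) - log (1 + s ^ 2)

noncomputable def sqrtAntideriv (s : ℝ) : ℝ := 2 / s * mulLogSum s + 4 * arctan s

theorem logRatioIntegrand_nonneg {z : ℝ} (hz : 0 ≤ z) : 0 ≤ logRatioIntegrand z := by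
  rcases eq_or_ne z 1 with rfl | hz1
  · simp [logRatioIntegrand]
  refine mul_nonneg (rpow_nonneg hz _) (log_nonneg ?_)
  rw [one_le_div (abs_pos.2 (sub_ne_zero.2 hz1.symm)), abs_le]
  constructor <;> linarith

theorem continuous_mulLogSum : Continuous mulLogSum := by
  have : Continuous fun s : ℝ => log (1 + s ^ 2) := by fun_prop (disch := intro; positivity)
  exact ((continuous_const.sub continuous_id).mul_log.add
    (continuous_const.add continuous_id).mul_log).sub this

theorem hasDerivAt_mulLogSum {s : ℝ} (hm : 1 - s ≠ 0) (hp : 1 + s ≠ 0) :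
    HasDerivAt mulLogSum (log (1 + s) - log (1 - s) - 2 * s / (1 + s ^ 2)) s := by
  have hsub := (hasDerivAt_mul_log hm).comp s ((hasDerivAt_id' s).const_sub 1)
  have hadd := (hasDerivAt_mul_log hp).comp s ((hasDerivAt_id' s).const_add 1)
  have hsq := ((hasDerivAt_pow 2 s).const_add 1).log (by positivity : (1 : ℝ) + s ^ 2 ≠ 0)
  refine ((hsub.add hadd).sub hsq).congr_deriv ?_
  simp
  ring

theorem hasDerivAt_sqrtAntideriv {s : ℝ} (hs : 0 < s) (hs1 : s ≠ 1) :
    HasDerivAt sqrtAntideriv (2 / s ^ 2 * log ((1 + s ^ 2) / |1 - s ^ 2|)) s := by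
  have hm : 1 - s ≠ 0 := sub_ne_zero.2 hs1.symm
  have hp : 1 + s ≠ 0 := by positivity
  have hfun : sqrtAntideriv = fun t => 2 * mulLogSum t / t + 4 * arctan t := by
    funext t
    rw [sqrtAntideriv]
    ring
  rw [hfun]
  refine ((((hasDerivAt_mulLogSum hm hp).const_mul 2).div (hasDerivAt_id' s) hs.ne').add
    ((hasDerivAt_arctan s).const_mul 4)).congr_deriv ?_
  rw [show 1 - s ^ 2 = (1 - s) * (1 + s) by ring,
    log_div (by positivity) (abs_ne_zero.2 (mul_ne_zero hm hp)), log_abs, log_mul hm hp, mulLogSum]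
  field_simp
  ring

theorem rpow_neg_three_halves {z : ℝ} (hz : 0 < z) : z ^ (-(3 : ℝ) / 2) = (z * √z)⁻¹ := by
  rw [show -(3 : ℝ) / 2 = -(1 + 1 / 2) by norm_num, rpow_neg hz.le, rpow_add hz, rpow_one,
    ← sqrt_eq_rpow]

theorem hasDerivAt_sqrtAntideriv_sqrt {z : ℝ} (hz : 0 < z) (hz1 : z ≠ 1) :
    HasDerivAt (fun z => sqrtAntideriv √z) (logRatioIntegrand z) z := by
  have hs : 0 < √z := sqrt_pos.2 hz
  have hs1 : √z ≠ 1 := by rwa [Ne, sqrt_eq_one]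
  refine ((hasDerivAt_sqrtAntideriv hs hs1).comp z (hasDerivAt_sqrt hz.ne')).congr_deriv ?_
  rw [logRatioIntegrand, rpow_neg_three_halves hz, sq_sqrt hz.le]
  field_simp

theorem sqrtAntideriv_zero : sqrtAntideriv 0 = 0 := by
  simp [sqrtAntideriv]

theorem tendsto_sqrtAntideriv_nhdsGT_zero : Tendsto sqrtAntideriv (𝓝[>] 0) (𝓝 0) := by
  -- `mulLogSum` and its derivative vanish at `0`, so `mulLogSum t / t → 0`.
  have hslope :=
    (hasDerivAt_mulLogSum (s := 0) (by norm_num) (by norm_num)).tendsto_slope_zero_right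
  have harctan : Tendsto (fun t => 4 * arctan t) (𝓝[>] 0) (𝓝 0) := by
    simpa using ((continuous_arctan.tendsto 0).const_mul 4).mono_left nhdsWithin_le_nhds
  have H := (hslope.const_mul 2).add harctan
  simp only [mulLogSum, zero_add, sub_zero, add_zero, log_one, mul_zero, zero_pow two_ne_zero,
    sub_self, smul_eq_mul, zero_div] at H
  refine H.congr fun t => ?_
  simp only [sqrtAntideriv, mulLogSum, div_eq_mul_inv]
  ring

theorem continuousOn_sqrtAntideriv : ContinuousOn sqrtAntideriv (Ici 0) := by
  intro s hs
  rcases (mem_Ici.1 hs).eq_or_lt with rfl | hs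
  · rw [← continuousWithinAt_Ioi_iff_Ici, ContinuousWithinAt, sqrtAntideriv_zero]
    exact tendsto_sqrtAntideriv_nhdsGT_zero
  · exact ((continuousAt_const.div continuousAt_id hs.ne').mul
      continuous_mulLogSum.continuousAt |>.add (continuous_arctan.continuousAt.const_mul 4))
      |>.continuousWithinAt

theorem sqrtAntideriv_eq {s : ℝ} (hs : 0 < s) (hs1 : s ≠ 1) :
    sqrtAntideriv s =
      2 * log |(s + 1) / (s - 1)| - 2 / s * log |(1 + s ^ 2) / (1 - s ^ 2)| + 4 * arctan s := by
  have hm : 1 - s ≠ 0 := sub_ne_zero.2 hs1.symm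
  have hp : 1 + s ≠ 0 := by positivity
  rw [show 1 - s ^ 2 = (1 - s) * (1 + s) by ring, show s - 1 = -(1 - s) by ring, add_comm s,
    log_abs, log_abs, log_div hp (neg_ne_zero.2 hm), log_neg_eq_log,
    log_div (by positivity) (mul_ne_zero hm hp), log_mul hm hp, sqrtAntideriv, mulLogSum]
  field_simp
  ring

theorem tendsto_sqrtAntideriv_atTop : Tendsto sqrtAntideriv atTop (𝓝 (2 * π)) := by
  -- `sqrtAntideriv_eq` at `s = t⁻¹`, using `arctan t⁻¹ = π / 2 - arctan t`
  set H : ℝ → ℝ := fun t =>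
    2 * log ((1 + t) / (1 - t)) - 2 * t * log ((t ^ 2 + 1) / (t ^ 2 - 1)) + (2 * π - 4 * arctan t)
  have hH : ContinuousAt H 0 := by fun_prop (disch := norm_num)
  have hHt : Tendsto H (𝓝[>] 0) (𝓝 (2 * π)) := by
    simpa [H] using hH.tendsto.mono_left nhdsWithin_le_nhds
  refine (hHt.comp tendsto_inv_atTop_nhdsGT_zero).congr' ?_
  filter_upwards [eventually_gt_atTop 1] with s hs
  have hs0 : s ≠ 0 := by positivity
  have e₁ : (1 + s⁻¹) / (1 - s⁻¹) = (s + 1) / (s - 1) := by field_simp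
  have e₂ : (s⁻¹ ^ 2 + 1) / (s⁻¹ ^ 2 - 1) = (1 + s ^ 2) / (1 - s ^ 2) := by field_simp
  simp only [Function.comp, H]
  rw [sqrtAntideriv_eq (by linarith) hs.ne', e₁, e₂, log_abs, log_abs,
    arctan_inv_of_pos (by linarith)]
  ring

theorem integral_Ioi_logRatioIntegrand {a : ℝ} (ha : 0 ≤ a) :
    ∫ z in Ioi a, logRatioIntegrand z = 2 * π - sqrtAntideriv √a :=
  integral_Ioi_of_hasDerivAt_of_nonneg_of_ne (c := 1)
    (continuousOn_sqrtAntideriv.comp_continuous continuous_sqrt fun _ => sqrt_nonneg _).continuousOn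
    (fun _ hz hz1 => hasDerivAt_sqrtAntideriv_sqrt (ha.trans_lt hz) hz1)
    (fun _ hz _ => logRatioIntegrand_nonneg (ha.trans hz.le))
    (tendsto_sqrtAntideriv_atTop.comp tendsto_sqrt_atTop)

theorem Gm32_eq_two_pi_sub_sqrtAntideriv {a : ℝ} (ha : 0 < a) (ha1 : a ≠ 1) :
    Gm32 a = 2 * π - sqrtAntideriv √a := by
  rw [sqrtAntideriv_eq (sqrt_pos.2 ha) (by rwa [Ne, sqrt_eq_one]), sq_sqrt ha.le, Gm32]
  ring

theorem stmt_13 :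
    (∀ a : ℝ, 0 < a → a ≠ 1 →
      (∫ z in Set.Ioi a, z ^ (-(3 : ℝ) / 2) * Real.log ((1 + z) / |1 - z|)) = Gm32 a) ∧
    (∫ z in Set.Ioi (0 : ℝ), z ^ (-(3 : ℝ) / 2) * Real.log ((1 + z) / |1 - z|)) =
      2 * Real.pi := by
  refine ⟨fun a ha ha1 => ?_, ?_⟩
  · rw [Gm32_eq_two_pi_sub_sqrtAntideriv ha ha1]
    exact integral_Ioi_logRatioIntegrand ha.le
  · have h := integral_Ioi_logRatioIntegrand le_rfl
    rwa [sqrt_zero, sqrtAntideriv_zero, sub_zero] at h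
end
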